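/- Two final states (with N violinists, N−2 one-gaps, and one two-gap each) are translates of each other if and only if their centroids have the same fractional part. -/

import Mathlib

/-- A two-sided dispersion move on single-occupancy states (finite sets of occupied rooms):
violinists in adjacent rooms `i` and `i+1` move to the nearest unoccupied rooms
`i - ℓ` (on the left) and `i + 1 + r` (on the right). -/
def FMove (S T : Finset ℤ) : Prop :=
  ∃ i ℓ r : ℤ, 1 ≤ ℓ ∧ 1 ≤ r ∧ i ∈ S ∧ i + 1 ∈ S ∧
    (∀ j : ℤ, 1 ≤ j → j < ℓ → i - j ∈ S) ∧ i - ℓ ∉ S ∧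
    (∀ j : ℤ, 2 ≤ j → j ≤ r → i + j ∈ S) ∧ i + 1 + r ∉ S ∧
    T = insert (i - ℓ) (insert (i + 1 + r) ((S.erase i).erase (i + 1)))

/-- Reachability by a sequence of moves. -/
def FReaches : Finset ℤ → Finset ℤ → Prop := Relation.ReflTransGen FMove

/-- A final state: no move is possible. -/
def FIsFinal (S : Finset ℤ) : Prop := ¬ ∃ T, FMove S T

/-- The centroid of a state: the average of the occupied room numbers. -/
noncomputable def centroidF (S : Finset ℤ) : ℚ := (∑ x ∈ S, (x : ℚ)) / S.card

/-- The shadow `F_{N,k}` with leftmost violinist at `p`: occupied rooms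
`p, p+2, ..., p+2(k-1), p+2k+1, p+2k+3, ..., p+2N-1`. -/
def shadow (N k : ℕ) (p : ℤ) : Finset ℤ :=
  (Finset.range N).image fun j => if j < k then p + 2 * j else p + 2 * j + 1

/-!
The shadow `F_{N,k}` starting at `p` has centroid `p + N - k / N`. Translating a state by `t`
shifts its centroid by the integer `t`, so translates have centroids with equal fractional
parts. Conversely, equal fractional parts make `(k - k') / N` an integer, which for
`k, k' < N` forces `k = k'`, and two shadows with the same `k` are translates.
-/

open Finset

lemma centroidF_image_add_const {S : Finset ℤ} (hS : S.Nonempty) (t : ℤ) :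
    centroidF (S.image (· + t)) = centroidF S + t := by
  have hinj : Function.Injective (· + t) := add_left_injective t
  have hcard : (#S : ℚ) ≠ 0 := by exact_mod_cast hS.card_pos.ne'
  rw [centroidF, centroidF, card_image_of_injective S hinj, sum_image hinj.injOn]
  push_cast
  rw [sum_add_distrib, sum_const, nsmul_eq_mul]
  field_simp

def shadowRoom (k : ℕ) (p : ℤ) (j : ℕ) : ℤ :=
  if j < k then p + 2 * j else p + 2 * j + 1

lemma shadow_eq_image_shadowRoom (N k : ℕ) (p : ℤ) :
    shadow N k p = (range N).image (shadowRoom k p) := rfl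

lemma shadowRoom_eq (k : ℕ) (p : ℤ) (j : ℕ) :
    shadowRoom k p j = p + 2 * j + if k ≤ j then 1 else 0 := by
  unfold shadowRoom
  split_ifs <;> omega

lemma shadowRoom_injective (k : ℕ) (p : ℤ) : Function.Injective (shadowRoom k p) := by
  intro a b h
  simp only [shadowRoom] at h
  split_ifs at h <;> omega

lemma shadowRoom_add (k : ℕ) (p t : ℤ) (j : ℕ) :
    shadowRoom k (p + t) j = shadowRoom k p j + t := by
  simp only [shadowRoom_eq]
  ring

lemma shadow_add (N k : ℕ) (p t : ℤ) :
    shadow N k (p + t) = (shadow N k p).image (· + t) := by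
  simp only [shadow_eq_image_shadowRoom, image_image, Function.comp_def, ← shadowRoom_add]

lemma card_shadow (N k : ℕ) (p : ℤ) : #(shadow N k p) = N := by
  rw [shadow_eq_image_shadowRoom, card_image_of_injective _ (shadowRoom_injective k p),
    card_range]

lemma sum_shadow {N k : ℕ} (hk : k ≤ N) (p : ℤ) :
    ∑ x ∈ shadow N k p, (x : ℚ) = N * p + N * (N - 1) + (N - k) := by
  have hgauss (n : ℕ) : (∑ j ∈ range n, (j : ℚ)) * 2 = n * (n - 1) := by
    induction n with
    | zero => simp
    | succ n ih => rw [sum_range_succ, add_mul, ih]; push_cast; ring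
  have hcount : #{j ∈ range N | k ≤ j} = N - k := by
    rw [range_eq_Ico, Ico_filter_le, Nat.card_Ico, zero_max]
  rw [shadow_eq_image_shadowRoom, sum_image (shadowRoom_injective k p).injOn]
  simp only [shadowRoom_eq]
  push_cast
  rw [sum_add_distrib, sum_add_distrib, sum_boole, hcount, sum_const, card_range, nsmul_eq_mul,
    ← mul_sum, Nat.cast_sub hk]
  linarith [hgauss N]

lemma centroidF_shadow {N k : ℕ} (hN : 0 < N) (hk : k ≤ N) (p : ℤ) :
    centroidF (shadow N k p) = p + N - k / N := by
  have hN' : (N : ℚ) ≠ 0 := by positivity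
  rw [centroidF, card_shadow, sum_shadow hk]
  field_simp
  ring

lemma eq_of_fract_int_sub_div_eq {K : Type*} [Field K] [LinearOrder K] [IsStrictOrderedRing K]
    [FloorRing K] {N k k' : ℕ} (hk : k < N) (hk' : k' < N) (a b : ℤ)
    (h : Int.fract ((a : K) - k' / N) = Int.fract ((b : K) - k / N)) : k' = k := by
  obtain ⟨z, hz⟩ := Int.fract_eq_fract.1 h
  have hN : (N : K) ≠ 0 := Nat.cast_ne_zero.2 (by omega)
  have hdiff : (k : ℤ) - k' = N * (z - a + b) := by
    have : (k : K) - k' = N * (z - a + b) := by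
      field_simp at hz
      linarith
    exact_mod_cast this
  have hzero : (k : ℤ) - k' = 0 :=
    Int.eq_zero_of_abs_lt_dvd ⟨_, hdiff⟩ (by rw [abs_lt]; omega)
  omega

theorem translate_iff_fract_centroid_general (N k k' : ℕ) (r r' : ℤ)
    (hk1 : 1 ≤ k) (hk2 : k ≤ N - 1) (hk2' : k' ≤ N - 1) :
    (∃ t : ℤ, shadow N k' r' = (shadow N k r).image (· + t)) ↔
      Int.fract (centroidF (shadow N k' r')) = Int.fract (centroidF (shadow N k r)) := by
  have hN : 0 < N := by omega
  have hkN : k < N := by omega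
  have hkN' : k' < N := by omega
  constructor
  · rintro ⟨t, ht⟩
    have hne : (shadow N k r).Nonempty := by rw [← card_pos, card_shadow]; exact hN
    rw [ht, centroidF_image_add_const hne, Int.fract_add_intCast]
  · intro h
    rw [centroidF_shadow hN hkN'.le, centroidF_shadow hN hkN.le] at h
    obtain rfl : k' = k :=
      eq_of_fract_int_sub_div_eq hkN hkN' (r' + N) (r + N) (by push_cast; exact h)
    exact ⟨r' - r, by rw [← shadow_add, add_sub_cancel]⟩

/-- Two final states (with `N` violinists each) are translates of each other iff their
centroids have the same fractional part. -/
theorem translate_iff_fract_centroid (N k k' : ℕ) (r r' : ℤ)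
    (hk1 : 1 ≤ k) (hk2 : k ≤ N - 1) (hk1' : 1 ≤ k') (hk2' : k' ≤ N - 1) :
    (∃ t : ℤ, shadow N k' r' = (shadow N k r).image (· + t)) ↔
      Int.fract (centroidF (shadow N k' r')) = Int.fract (centroidF (shadow N k r)) :=
  translate_iff_fract_centroid_general N k k' r r' hk1 hk2 hk2'
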